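/- Let V be a valuation domain with field of fractions K, maximal ideal 𝔪, valuation v, and value group Γ, such that V/𝔪 is algebraically closed and 𝔪 is not a principal ideal of V. Let φ ∈ K(x) be a nonzero rational function for which there exist α, ε ∈ Γ with ε > 0, integers c_1, c_2 ∈ ℤ, and β_1, β_2 ∈ Γ such that minval_φ(γ) = c_1 γ + β_1 for all γ with α − ε ≤ γ ≤ α and minval_φ(γ) = c_2 γ + β_2 for all γ with α ≤ γ ≤ α + ε. If c_1 > c_2, then there exists a ∈ K with v(a) = α and v(φ(a)) > minval_φ(α). If c_1 < c_2, then there exists a ∈ K with v(a) = α and v(φ(a)) < minval_φ(α). -/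

import Mathlib

open Polynomial

/-- An (additive) valuation `v : K → Γ ∪ {∞}` on a field `K` with value group `Γ`
(surjectivity onto `Γ` makes `Γ` the value group). -/
structure AddVal (K : Type*) [Field K] (Γ : Type*) [AddCommGroup Γ] [LinearOrder Γ] [IsOrderedAddMonoid Γ] where
  v : K → WithTop Γ
  v_eq_top_iff : ∀ x : K, v x = ⊤ ↔ x = 0
  v_mul : ∀ x y : K, v (x * y) = v x + v y
  v_one : v 1 = 0
  v_min_le_add : ∀ x y : K, min (v x) (v y) ≤ v (x + y)
  v_surj : ∀ γ : Γ, ∃ x : K, v x = (γ : WithTop Γ)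

variable {K : Type*} [Field K] {Γ : Type*} [AddCommGroup Γ] [LinearOrder Γ] [IsOrderedAddMonoid Γ]

/-- The minimum valuation function of a nonzero polynomial:
`minval_f(γ) = min {v(a_i) + i·γ : 0 ≤ i ≤ deg f}`. -/
noncomputable def minval (w : AddVal K Γ) (f : Polynomial K) (γ : Γ) : WithTop Γ :=
  (Finset.range (f.natDegree + 1)).inf fun i => w.v (f.coeff i) + ((i • γ : Γ) : WithTop Γ)

/-- The minimum valuation function of a nonzero rational function `φ = f/g`:
`minval_φ = minval_f - minval_g` (independent of the representation `f/g`). -/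
noncomputable def minvalRat (w : AddVal K Γ) (φ : RatFunc K) (γ : Γ) : Γ :=
  (minval w φ.num γ).untopD 0 - (minval w φ.denom γ).untopD 0


namespace AddVal

variable (w : AddVal K Γ)

lemma v_zero : w.v 0 = ⊤ := (w.v_eq_top_iff 0).2 rfl

lemma v_ne_top {x : K} (hx : x ≠ 0) : w.v x ≠ ⊤ := fun h => hx ((w.v_eq_top_iff x).1 h)

lemma v_neg (x : K) : w.v (-x) = w.v x := by
  have h1 : w.v (-1 : K) = 0 := by
    have h2 : w.v ((-1 : K) * (-1)) = w.v (-1) + w.v (-1) := w.v_mul _ _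
    rw [neg_mul_neg, one_mul, w.v_one] at h2
    have hne : w.v (-1 : K) ≠ ⊤ := w.v_ne_top (by norm_num)
    lift (w.v (-1 : K)) to Γ using hne with g hg
    rw [← WithTop.coe_add] at h2
    rw [← WithTop.coe_zero, WithTop.coe_eq_coe] at h2 ⊢
    rcases lt_trichotomy g 0 with h | h | h
    · exact absurd h2.symm (ne_of_lt (add_neg h h))
    · exact h
    · exact absurd h2.symm (ne_of_gt (add_pos h h))
  calc w.v (-x) = w.v ((-1) * x) := by ring_nf
    _ = w.v (-1) + w.v x := w.v_mul _ _
    _ = w.v x := by rw [h1, zero_add]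

lemma v_add_eq_left {x y : K} (h : w.v x < w.v y) : w.v (x + y) = w.v x := by
  refine le_antisymm ?_ ?_
  · by_contra hlt
    push_neg at hlt
    have hx : x = (x + y) + (-y) := by ring
    have h2 := w.v_min_le_add (x + y) (-y)
    rw [w.v_neg, ← hx] at h2
    have : w.v x < min (w.v (x + y)) (w.v y) := lt_min hlt h
    exact absurd h2 (not_le.2 this)
  · have := w.v_min_le_add x y
    rwa [min_eq_left h.le] at this

lemma lt_v_sum {ι : Type*} (s : Finset ι) (f : ι → K) (c : WithTop Γ)
    (hc : ∀ j ∈ s, c < w.v (f j)) (hct : c ≠ ⊤) : c < w.v (∑ j ∈ s, f j) := by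
  classical
  induction s using Finset.induction with
  | empty => simp [w.v_zero]; exact lt_top_iff_ne_top.2 hct
  | @insert a s' ha ih =>
    rw [Finset.sum_insert ha]
    calc c < min (w.v (f a)) (w.v (∑ j ∈ s', f j)) := by
            exact lt_min (hc a (Finset.mem_insert_self a s'))
              (ih (fun j hj => hc j (Finset.mem_insert_of_mem hj)))
      _ ≤ _ := w.v_min_le_add _ _

lemma v_sum_eq {ι : Type*} (s : Finset ι) (f : ι → K) (j₀ : ι) (hj₀ : j₀ ∈ s)
    (hne : w.v (f j₀) ≠ ⊤) (hmin : ∀ j ∈ s, j ≠ j₀ → w.v (f j₀) < w.v (f j)) :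
    w.v (∑ j ∈ s, f j) = w.v (f j₀) := by
  classical
  rw [← Finset.add_sum_erase s f hj₀]
  rw [w.v_add_eq_left]
  exact w.lt_v_sum _ _ _ (fun j hj => hmin j (Finset.mem_of_mem_erase hj)
    (Finset.ne_of_mem_erase hj)) hne

lemma v_coe_mul {x y : K} {a b : Γ} (hx : w.v x = (a : WithTop Γ)) (hy : w.v y = (b : WithTop Γ)) :
    w.v (x * y) = ((a + b : Γ) : WithTop Γ) := by
  rw [w.v_mul, hx, hy, WithTop.coe_add]

lemma v_inv {x : K} {a : Γ} (hx : w.v x = (a : WithTop Γ)) :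
    w.v x⁻¹ = ((-a : Γ) : WithTop Γ) := by
  have hx0 : x ≠ 0 := fun h => by simp [h, w.v_zero] at hx
  have h1 : w.v (x * x⁻¹) = 0 := by rw [mul_inv_cancel₀ hx0, w.v_one]
  rw [w.v_mul, hx] at h1
  have hne : w.v x⁻¹ ≠ ⊤ := w.v_ne_top (inv_ne_zero hx0)
  lift w.v x⁻¹ to Γ using hne with b hb
  rw [← WithTop.coe_add, ← WithTop.coe_zero, WithTop.coe_eq_coe] at h1
  rw [WithTop.coe_eq_coe]
  exact (neg_eq_of_add_eq_zero_right h1).symm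

lemma v_div {x y : K} {a b : Γ} (hx : w.v x = (a : WithTop Γ)) (hy : w.v y = (b : WithTop Γ)) :
    w.v (x / y) = ((a - b : Γ) : WithTop Γ) := by
  rw [div_eq_mul_inv, w.v_coe_mul hx (w.v_inv hy), sub_eq_add_neg]

lemma v_pow {x : K} {a : Γ} (hx : w.v x = (a : WithTop Γ)) (n : ℕ) :
    w.v (x ^ n) = ((n • a : Γ) : WithTop Γ) := by
  induction n with
  | zero => simpa using w.v_one
  | succ k ih =>
    rw [pow_succ, w.v_coe_mul ih hx, succ_nsmul]

end AddVal

section Density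

variable (w : AddVal K Γ) (V : Subring K) (hV : ∀ x : K, x ∈ V ↔ 0 ≤ w.v x)
  (m : Ideal ↥V) (hm : ∀ x : ↥V, x ∈ m ↔ 0 < w.v (x : K)) (hnp : ¬ m.IsPrincipal)

include hV hm hnp in
lemma exists_between_zero (g : Γ) (hg : 0 < g) : ∃ δ : Γ, 0 < δ ∧ δ < g := by
  by_contra hcon
  push_neg at hcon
  obtain ⟨x, hx⟩ := w.v_surj g
  have hxV : x ∈ V := (hV x).2 (by rw [hx]; exact_mod_cast hg.le)
  have hx0 : x ≠ 0 := fun h => by simp [h, w.v_zero] at hx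
  apply hnp
  refine ⟨⟨⟨x, hxV⟩, ?_⟩⟩
  ext y
  show y ∈ m ↔ y ∈ Ideal.span {(⟨x, hxV⟩ : ↥V)}
  rw [hm, Ideal.mem_span_singleton]
  constructor
  · intro hy
    by_cases hy0 : (y : K) = 0
    · have : y = 0 := Subtype.ext hy0
      simp [this]
    · have hyne : w.v (y : K) ≠ ⊤ := w.v_ne_top hy0
      lift w.v (y : K) to Γ using hyne with c hc
      have hcpos : 0 < c := by exact_mod_cast hy
      have hgc : g ≤ c := hcon c hcpos
      have hdiv : w.v ((y : K) / x) = ((c - g : Γ) : WithTop Γ) := w.v_div hc.symm hx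
      have hdV : (y : K) / x ∈ V := (hV _).2 (by rw [hdiv]; exact_mod_cast sub_nonneg.2 hgc)
      refine ⟨⟨(y : K) / x, hdV⟩, ?_⟩
      apply Subtype.ext
      show (y : K) = x * ((y : K) / x)
      field_simp
  · rintro ⟨z, rfl⟩
    show 0 < w.v ((⟨x, hxV⟩ * z : ↥V) : K)
    have : ((⟨x, hxV⟩ * z : ↥V) : K) = x * (z : K) := rfl
    rw [this, w.v_mul, hx]
    have hz : 0 ≤ w.v (z : K) := (hV _).1 z.2
    calc (0 : WithTop Γ) < (g : WithTop Γ) := by exact_mod_cast hg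
      _ = (g : WithTop Γ) + 0 := by simp
      _ ≤ _ := by exact add_le_add le_rfl hz

include hV hm hnp in
lemma exists_half (g : Γ) (hg : 0 < g) : ∃ δ : Γ, 0 < δ ∧ δ + δ ≤ g := by
  obtain ⟨δ, hδ0, hδg⟩ := exists_between_zero w V hV m hm hnp g hg
  by_cases h : δ + δ ≤ g
  · exact ⟨δ, hδ0, h⟩
  · push_neg at h
    refine ⟨g - δ, sub_pos.2 hδg, ?_⟩
    have : g < δ + δ := h
    calc (g - δ) + (g - δ) = g + (g - (δ + δ)) := by abel
      _ ≤ g + 0 := by exact add_le_add le_rfl (by simpa using this.le)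
      _ = g := by simp

include hV hm hnp in
lemma exists_pow2_smul_le (n : ℕ) (g : Γ) (hg : 0 < g) :
    ∃ δ : Γ, 0 < δ ∧ (2 ^ n) • δ ≤ g := by
  induction n generalizing g with
  | zero => exact ⟨g, hg, by simp⟩
  | succ k ih =>
    obtain ⟨δ, hδ0, hδ⟩ := ih g hg
    obtain ⟨δ₂, hδ₂0, hδ₂⟩ := exists_half w V hV m hm hnp δ hδ0
    refine ⟨δ₂, hδ₂0, ?_⟩
    have : (2 ^ (k + 1)) • δ₂ = (2 ^ k) • (δ₂ + δ₂) := by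
      rw [← two_nsmul, ← mul_nsmul', pow_succ]
    rw [this]
    calc (2 ^ k) • (δ₂ + δ₂) ≤ (2 ^ k) • δ := nsmul_le_nsmul_right hδ₂ _
      _ ≤ g := hδ

include hV hm hnp in
lemma exists_nsmul_lt' (n : ℕ) (g : Γ) (hg : 0 < g) :
    ∃ δ : Γ, 0 < δ ∧ n • δ < g := by
  obtain ⟨δ₁, hδ₁0, hδ₁g⟩ := exists_between_zero w V hV m hm hnp g hg
  obtain ⟨δ, hδ0, hδ⟩ := exists_pow2_smul_le w V hV m hm hnp n δ₁ hδ₁0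
  refine ⟨δ, hδ0, ?_⟩
  calc n • δ ≤ (2 ^ n) • δ := nsmul_le_nsmul_left hδ0.le (Nat.le_of_lt Nat.lt_two_pow_self)
    _ ≤ δ₁ := hδ
    _ < g := hδ₁g

end Density

section Residue

variable {w : AddVal K Γ} {V : Subring K} {m' : Ideal ↥V}
variable (w : AddVal K Γ) (V : Subring K) (hV : ∀ x : K, x ∈ V ↔ 0 ≤ w.v x)
  (m : Ideal ↥V) (hm : ∀ x : ↥V, x ∈ m ↔ 0 < w.v (x : K))

include hV hm in
lemma m_isMaximal : m.IsMaximal := by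
  rw [Ideal.isMaximal_iff]
  constructor
  · intro h1
    have := (hm 1).1 h1
    rw [show ((1 : ↥V) : K) = 1 from rfl, w.v_one] at this
    exact lt_irrefl _ this
  · intro J x hmJ hxm hxJ
    have hx0 : (0 : WithTop Γ) ≤ w.v (x : K) := (hV _).1 x.2
    have hx1 : ¬ 0 < w.v (x : K) := fun h => hxm ((hm x).2 h)
    have hveq : w.v (x : K) = ((0 : Γ) : WithTop Γ) := by
      rw [WithTop.coe_zero]; exact le_antisymm (not_lt.1 hx1) hx0
    have hxne : (x : K) ≠ 0 := by
      intro h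
      rw [h, w.v_zero] at hveq
      simp at hveq
    have hinv : w.v (x : K)⁻¹ = ((0 : Γ) : WithTop Γ) := by
      rw [w.v_inv hveq, neg_zero]
    have hinvV : (x : K)⁻¹ ∈ V := (hV _).2 (by rw [hinv]; simp)
    have h1 : (⟨(x : K)⁻¹, hinvV⟩ * x : ↥V) = 1 := by
      apply Subtype.ext
      show (x : K)⁻¹ * x = 1
      exact inv_mul_cancel₀ hxne
    rw [← h1]
    exact J.mul_mem_left _ hxJ

/-- residue of an element of `K`, treating elements outside `V` as `0`. -/
noncomputable def resCoef (V : Subring K) (m : Ideal ↥V) (x : K) : ↥V ⧸ m := by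
  classical exact if h : x ∈ V then Ideal.Quotient.mk m ⟨x, h⟩ else 0

lemma resCoef_of_mem (V : Subring K) (m : Ideal ↥V) {x : K} (h : x ∈ V) :
    resCoef V m x = Ideal.Quotient.mk m ⟨x, h⟩ := by
  rw [resCoef]; simp [h]

/-- The residue polynomial of `f` at the point `a₀` scaled by `u`. -/
noncomputable def resPoly (f : K[X]) (a₀ u : K) : Polynomial (↥V ⧸ m) :=
  ∑ i ∈ Finset.range (f.natDegree + 1),
    Polynomial.C (resCoef V m (f.coeff i * a₀ ^ i / u)) * Polynomial.X ^ i

lemma resPoly_coeff (f : K[X]) (a₀ u : K) (j : ℕ) :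
    (resPoly V m f a₀ u).coeff j =
      if j ≤ f.natDegree then resCoef V m (f.coeff j * a₀ ^ j / u) else 0 := by
  rw [resPoly, Polynomial.finset_sum_coeff]
  simp only [Polynomial.coeff_C_mul, Polynomial.coeff_X_pow, mul_ite, mul_one, mul_zero]
  rw [Finset.sum_ite_eq (Finset.range (f.natDegree + 1)) j]
  by_cases h : j ≤ f.natDegree
  · rw [if_pos (Finset.mem_range.2 (Nat.lt_succ_of_le h)), if_pos h]
  · rw [if_neg (fun hh => h (Nat.lt_succ_iff.1 (Finset.mem_range.1 hh))), if_neg h]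

lemma natDegree_resPoly_le (f : K[X]) (a₀ u : K) :
    (resPoly V m f a₀ u).natDegree ≤ f.natDegree := by
  rw [Polynomial.natDegree_le_iff_coeff_eq_zero]
  intro j hj
  rw [resPoly_coeff, if_neg (not_le.2 hj)]

end Residue

section Iset

variable (w : AddVal K Γ)

/-- The set of indices where the minimum in `minval` is attained. -/
noncomputable def Iset (f : K[X]) (γ : Γ) : Finset ℕ :=
  (Finset.range (f.natDegree + 1)).filter
    (fun i => w.v (f.coeff i) + ((i • γ : Γ) : WithTop Γ) = minval w f γ)

lemma Iset_nonempty (f : K[X]) (γ : Γ) : (Iset w f γ).Nonempty := by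
  obtain ⟨i, hi, hieq⟩ := Finset.exists_mem_eq_inf (Finset.range (f.natDegree + 1))
    (by simp) (fun i => w.v (f.coeff i) + ((i • γ : Γ) : WithTop Γ))
  exact ⟨i, Finset.mem_filter.2 ⟨hi, hieq.symm⟩⟩

lemma minval_le (f : K[X]) (γ : Γ) (i : ℕ) (hi : i ≤ f.natDegree) :
    minval w f γ ≤ w.v (f.coeff i) + ((i • γ : Γ) : WithTop Γ) :=
  Finset.inf_le (Finset.mem_range.2 (Nat.lt_succ_of_le hi))

lemma minval_ne_top {f : K[X]} (hf : f ≠ 0) (γ : Γ) : minval w f γ ≠ ⊤ := by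
  intro h
  have h2 := minval_le w f γ f.natDegree le_rfl
  rw [h, top_le_iff] at h2
  have : w.v (f.coeff f.natDegree) = ⊤ := by
    by_contra hc
    lift w.v (f.coeff f.natDegree) to Γ using hc with e he
    rw [← WithTop.coe_add] at h2
    exact WithTop.coe_ne_top h2
  exact (Polynomial.leadingCoeff_ne_zero.2 hf) ((w.v_eq_top_iff _).1 this)

lemma Iset_le_natDegree {f : K[X]} {γ : Γ} {i : ℕ} (hi : i ∈ Iset w f γ) :
    i ≤ f.natDegree :=
  Nat.lt_succ_iff.1 (Finset.mem_range.1 (Finset.mem_filter.1 hi).1)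

lemma Iset_eq {f : K[X]} {γ : Γ} {i : ℕ} (hi : i ∈ Iset w f γ) :
    w.v (f.coeff i) + ((i • γ : Γ) : WithTop Γ) = minval w f γ :=
  (Finset.mem_filter.1 hi).2

lemma Iset_coeff_v {f : K[X]} (hf : f ≠ 0) {α : Γ} {μ : Γ} (hμ : minval w f α = (μ : WithTop Γ))
    {i : ℕ} (hi : i ∈ Iset w f α) : w.v (f.coeff i) = ((μ - i • α : Γ) : WithTop Γ) := by
  have h := Iset_eq w hi
  rw [hμ] at h
  have hne : w.v (f.coeff i) ≠ ⊤ := by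
    intro hh; rw [hh] at h; simp at h
  lift w.v (f.coeff i) to Γ using hne with e he
  rw [← WithTop.coe_add, WithTop.coe_eq_coe] at h
  rw [WithTop.coe_eq_coe]
  rw [← h]; abel

end Iset

section Shift

variable (w : AddVal K Γ)

/-- largest index attaining the minimum -/
noncomputable def iMax (f : K[X]) (γ : Γ) : ℕ := (Iset w f γ).max' (Iset_nonempty w f γ)

/-- smallest index attaining the minimum -/
noncomputable def iMin (f : K[X]) (γ : Γ) : ℕ := (Iset w f γ).min' (Iset_nonempty w f γ)

lemma iMax_mem (f : K[X]) (γ : Γ) : iMax w f γ ∈ Iset w f γ :=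
  (Iset w f γ).max'_mem _

lemma iMin_mem (f : K[X]) (γ : Γ) : iMin w f γ ∈ Iset w f γ :=
  (Iset w f γ).min'_mem _

/-- the smallest value of a non-minimizing term -/
noncomputable def theta (f : K[X]) (α : Γ) : WithTop Γ :=
  ((Finset.range (f.natDegree + 1)).filter
    (fun i => w.v (f.coeff i) + ((i • α : Γ) : WithTop Γ) ≠ minval w f α)).inf
    (fun i => w.v (f.coeff i) + ((i • α : Γ) : WithTop Γ))

lemma minval_lt_theta {f : K[X]} (hf : f ≠ 0) (α : Γ) : minval w f α < theta w f α := by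
  rw [theta, Finset.lt_inf_iff (lt_top_iff_ne_top.2 (minval_ne_top w hf α))]
  intro i hi
  obtain ⟨hir, hine⟩ := Finset.mem_filter.1 hi
  exact lt_of_le_of_ne (minval_le w f α i (Nat.lt_succ_iff.1 (Finset.mem_range.1 hir)))
    (Ne.symm hine)

lemma theta_le {f : K[X]} {α : Γ} {i : ℕ} (hi : i ≤ f.natDegree) (hne : i ∉ Iset w f α) :
    theta w f α ≤ w.v (f.coeff i) + ((i • α : Γ) : WithTop Γ) := by
  apply Finset.inf_le
  rw [Finset.mem_filter]
  refine ⟨Finset.mem_range.2 (Nat.lt_succ_of_le hi), fun h => hne ?_⟩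
  rw [Iset, Finset.mem_filter]
  exact ⟨Finset.mem_range.2 (Nat.lt_succ_of_le hi), h⟩

lemma minval_shift_left {f : K[X]} (hf : f ≠ 0) {α : Γ} {μ : Γ}
    (hμ : minval w f α = (μ : WithTop Γ)) {δ : Γ} (hδ : 0 < δ)
    (hθ : ((μ + f.natDegree • δ : Γ) : WithTop Γ) < theta w f α) :
    minval w f (α - δ) = ((μ - iMax w f α • δ : Γ) : WithTop Γ) := by
  set iM := iMax w f α with hiM
  have hiMm := iMax_mem w f α
  apply le_antisymm
  · have h1 := minval_le w f (α - δ) iM (Iset_le_natDegree w hiMm)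
    rw [Iset_coeff_v w hf hμ hiMm, ← WithTop.coe_add] at h1
    convert h1 using 2
    rw [smul_sub]
    abel
  · rw [minval, Finset.le_inf_iff]
    intro i hir
    have hin : i ≤ f.natDegree := Nat.lt_succ_iff.1 (Finset.mem_range.1 hir)
    by_cases hi : i ∈ Iset w f α
    · rw [Iset_coeff_v w hf hμ hi, ← WithTop.coe_add, WithTop.coe_le_coe]
      have h2 : i • δ ≤ iM • δ :=
        nsmul_le_nsmul_left hδ.le ((Iset w f α).le_max' i hi)
      calc μ - iM • δ ≤ μ - i • δ := by
            exact sub_le_sub_left h2 μ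
        _ = μ - i • α + i • (α - δ) := by rw [smul_sub]; abel
    · have h3 := theta_le w hin hi
      have h4 : ((μ + f.natDegree • δ : Γ) : WithTop Γ) <
          w.v (f.coeff i) + ((i • α : Γ) : WithTop Γ) := lt_of_lt_of_le hθ h3
      by_cases hfi : f.coeff i = 0
      · rw [hfi, w.v_zero, top_add]
        exact le_top
      · lift w.v (f.coeff i) to Γ using w.v_ne_top hfi with e he
        rw [← WithTop.coe_add, WithTop.coe_lt_coe] at h4
        rw [← WithTop.coe_add, WithTop.coe_le_coe]
        have h5 : i • δ ≤ f.natDegree • δ := nsmul_le_nsmul_left hδ.le hin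
        have h6 : (0 : Γ) ≤ iM • δ := nsmul_nonneg hδ.le _
        calc μ - iM • δ ≤ μ := by simpa using h6
          _ ≤ μ + (f.natDegree • δ - i • δ) := le_add_of_nonneg_right (sub_nonneg.2 h5)
          _ = (μ + f.natDegree • δ) - i • δ := by abel
          _ ≤ (e + i • α) - i • δ := sub_le_sub_right h4.le _
          _ = e + i • (α - δ) := by rw [smul_sub]; abel

lemma minval_shift_right {f : K[X]} (hf : f ≠ 0) {α : Γ} {μ : Γ}
    (hμ : minval w f α = (μ : WithTop Γ)) {δ : Γ} (hδ : 0 < δ)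
    (hθ : ((μ + f.natDegree • δ : Γ) : WithTop Γ) < theta w f α) :
    minval w f (α + δ) = ((μ + iMin w f α • δ : Γ) : WithTop Γ) := by
  set iN := iMin w f α with hiN
  have hiNm := iMin_mem w f α
  apply le_antisymm
  · have h1 := minval_le w f (α + δ) iN (Iset_le_natDegree w hiNm)
    rw [Iset_coeff_v w hf hμ hiNm, ← WithTop.coe_add] at h1
    convert h1 using 2
    rw [smul_add]
    abel
  · rw [minval, Finset.le_inf_iff]
    intro i hir
    have hin : i ≤ f.natDegree := Nat.lt_succ_iff.1 (Finset.mem_range.1 hir)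
    by_cases hi : i ∈ Iset w f α
    · rw [Iset_coeff_v w hf hμ hi, ← WithTop.coe_add, WithTop.coe_le_coe]
      have h2 : iN • δ ≤ i • δ :=
        nsmul_le_nsmul_left hδ.le ((Iset w f α).min'_le i hi)
      calc μ + iN • δ ≤ μ + i • δ := add_le_add_right h2 μ
        _ = μ - i • α + i • (α + δ) := by rw [smul_add]; abel
    · have h3 := theta_le w hin hi
      have h4 : ((μ + f.natDegree • δ : Γ) : WithTop Γ) <
          w.v (f.coeff i) + ((i • α : Γ) : WithTop Γ) := lt_of_lt_of_le hθ h3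
      by_cases hfi : f.coeff i = 0
      · rw [hfi, w.v_zero, top_add]
        exact le_top
      · lift w.v (f.coeff i) to Γ using w.v_ne_top hfi with e he
        rw [← WithTop.coe_add, WithTop.coe_lt_coe] at h4
        rw [← WithTop.coe_add, WithTop.coe_le_coe]
        have h5 : iN • δ ≤ f.natDegree • δ :=
          nsmul_le_nsmul_left hδ.le (le_trans (Iset_le_natDegree w hiNm) le_rfl)
        have h6 : (0 : Γ) ≤ i • δ := nsmul_nonneg hδ.le _
        calc μ + iN • δ ≤ μ + f.natDegree • δ := add_le_add_right h5 μ
          _ ≤ e + i • α := h4.le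
          _ ≤ e + i • α + i • δ := le_add_of_nonneg_right h6
          _ = e + i • (α + δ) := by rw [smul_add]; abel

end Shift

section ResPolyStruct

variable (w : AddVal K Γ) (V : Subring K) (hV : ∀ x : K, x ∈ V ↔ 0 ≤ w.v x)
  (m : Ideal ↥V) (hm : ∀ x : ↥V, x ∈ m ↔ 0 < w.v (x : K))

include hV hm in
lemma resPoly_coeff_ne_zero_iff {f : K[X]} (hf : f ≠ 0) {α μ : Γ}
    (hμ : minval w f α = (μ : WithTop Γ)) {a₀ u : K}
    (ha₀ : w.v a₀ = (α : WithTop Γ)) (hu : w.v u = (μ : WithTop Γ)) (j : ℕ) :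
    (resPoly V m f a₀ u).coeff j ≠ 0 ↔ j ∈ Iset w f α := by
  rw [resPoly_coeff]
  by_cases hjn : j ≤ f.natDegree
  · rw [if_pos hjn]
    by_cases hfj : f.coeff j = 0
    · have hc : f.coeff j * a₀ ^ j / u = 0 := by rw [hfj]; ring
      rw [hc]
      have h0 : resCoef V m (0 : K) = 0 := by
        rw [resCoef_of_mem V m V.zero_mem]
        exact map_zero _
      simp only [h0, ne_eq, not_true_eq_false, false_iff]
      intro hj
      have := Iset_eq w hj
      rw [hfj, w.v_zero, top_add, hμ] at this
      exact WithTop.top_ne_coe this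
    · lift w.v (f.coeff j) to Γ using w.v_ne_top hfj with e he
      have hvc : w.v (f.coeff j * a₀ ^ j / u) = ((e + j • α - μ : Γ) : WithTop Γ) :=
        w.v_div (w.v_coe_mul he.symm (w.v_pow ha₀ j)) hu
      have hle : μ ≤ e + j • α := by
        have := minval_le w f α j hjn
        rw [hμ, ← he, ← WithTop.coe_add, WithTop.coe_le_coe] at this
        exact this
      have hcV : f.coeff j * a₀ ^ j / u ∈ V := (hV _).2 (by
        rw [hvc]; exact_mod_cast sub_nonneg.2 hle)
      rw [resCoef_of_mem V m hcV, ne_eq, Ideal.Quotient.eq_zero_iff_mem, hm]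
      show ¬ (0 < w.v (f.coeff j * a₀ ^ j / u)) ↔ _
      rw [hvc]
      constructor
      · intro h
        have h2 : e + j • α - μ ≤ 0 := by exact_mod_cast not_lt.1 h
        have h3 : e + j • α = μ := le_antisymm (by simpa [sub_nonpos] using h2) hle
        rw [Iset, Finset.mem_filter]
        refine ⟨Finset.mem_range.2 (Nat.lt_succ_of_le hjn), ?_⟩
        rw [← he, hμ, ← WithTop.coe_add, WithTop.coe_eq_coe]
        exact h3
      · intro hj h
        have := Iset_eq w hj
        rw [← he, hμ, ← WithTop.coe_add, WithTop.coe_eq_coe] at this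
        rw [this] at h
        simp at h
  · rw [if_neg hjn]
    simp only [ne_eq, not_true_eq_false, false_iff]
    intro hj
    exact hjn (Iset_le_natDegree w hj)

include hV hm in
lemma natDegree_resPoly {f : K[X]} (hf : f ≠ 0) {α μ : Γ}
    (hμ : minval w f α = (μ : WithTop Γ)) {a₀ u : K}
    (ha₀ : w.v a₀ = (α : WithTop Γ)) (hu : w.v u = (μ : WithTop Γ)) :
    (resPoly V m f a₀ u).natDegree = iMax w f α := by
  apply le_antisymm
  · rw [Polynomial.natDegree_le_iff_coeff_eq_zero]
    intro j hj
    by_contra hc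
    have := (resPoly_coeff_ne_zero_iff w V hV m hm hf hμ ha₀ hu j).1 hc
    exact absurd ((Iset w f α).le_max' j this) (not_le.2 hj)
  · exact Polynomial.le_natDegree_of_ne_zero
      ((resPoly_coeff_ne_zero_iff w V hV m hm hf hμ ha₀ hu _).2 (iMax_mem w f α))

include hV hm in
lemma resPoly_ne_zero {f : K[X]} (hf : f ≠ 0) {α μ : Γ}
    (hμ : minval w f α = (μ : WithTop Γ)) {a₀ u : K}
    (ha₀ : w.v a₀ = (α : WithTop Γ)) (hu : w.v u = (μ : WithTop Γ)) :
    resPoly V m f a₀ u ≠ 0 := by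
  intro h
  have := (resPoly_coeff_ne_zero_iff w V hV m hm hf hμ ha₀ hu (iMax w f α)).2 (iMax_mem w f α)
  rw [h] at this
  simp at this

include hV hm in
lemma natTrailingDegree_resPoly {f : K[X]} (hf : f ≠ 0) {α μ : Γ}
    (hμ : minval w f α = (μ : WithTop Γ)) {a₀ u : K}
    (ha₀ : w.v a₀ = (α : WithTop Γ)) (hu : w.v u = (μ : WithTop Γ)) :
    (resPoly V m f a₀ u).natTrailingDegree = iMin w f α := by
  apply le_antisymm
  · exact Polynomial.natTrailingDegree_le_of_ne_zero
      ((resPoly_coeff_ne_zero_iff w V hV m hm hf hμ ha₀ hu _).2 (iMin_mem w f α))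
  · apply (Iset w f α).min'_le
    rw [← resPoly_coeff_ne_zero_iff w V hV m hm hf hμ ha₀ hu]
    rw [← Polynomial.trailingCoeff]
    exact Polynomial.trailingCoeff_nonzero_iff_nonzero.2
      (resPoly_ne_zero w V hV m hm hf hμ ha₀ hu)

end ResPolyStruct

section Helpers

lemma zsmul_eq_zero_int {k : ℤ} {δ : Γ} (hδ : 0 < δ) (h : k • δ = 0) : k = 0 := by
  rcases lt_trichotomy k 0 with hk | hk | hk
  · have : (0 : Γ) < (-k) • δ := by
      apply zsmul_pos hδ
      omega
    rw [neg_smul, h] at this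
    simp at this
  · exact hk
  · have := zsmul_pos hδ hk
    rw [h] at this
    simp at this

end Helpers

section Delta

variable (w : AddVal K Γ) (V : Subring K) (hV : ∀ x : K, x ∈ V ↔ 0 ≤ w.v x)
  (m : Ideal ↥V) (hm : ∀ x : ↥V, x ∈ m ↔ 0 < w.v (x : K)) (hnp : ¬ m.IsPrincipal)

omit [Field K] in
lemma exists_gamma_bound (θ : WithTop Γ) (μ : Γ) (h : (μ : WithTop Γ) < θ) (ε : Γ) (hε : 0 < ε) :
    ∃ b : Γ, 0 < b ∧ ∀ δ : Γ, δ < b → ((μ + δ : Γ) : WithTop Γ) < θ := by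
  induction θ using WithTop.recTopCoe with
  | top => exact ⟨ε, hε, fun δ _ => WithTop.coe_lt_top _⟩
  | coe θ₀ =>
    refine ⟨θ₀ - μ, ?_, fun δ hδ => ?_⟩
    · rw [sub_pos]; exact_mod_cast h
    · rw [WithTop.coe_lt_coe]
      have : μ + δ < μ + (θ₀ - μ) := add_lt_add_right hδ μ
      simpa using this

include hV hm hnp in
lemma exists_delta (θ₁ θ₂ : WithTop Γ) (μ₁ μ₂ : Γ) (h₁ : (μ₁ : WithTop Γ) < θ₁)
    (h₂ : (μ₂ : WithTop Γ) < θ₂) (ε : Γ) (hε : 0 < ε) (n : ℕ) :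
    ∃ δ : Γ, 0 < δ ∧ δ ≤ ε ∧ ((μ₁ + n • δ : Γ) : WithTop Γ) < θ₁ ∧
      ((μ₂ + n • δ : Γ) : WithTop Γ) < θ₂ := by
  obtain ⟨b₁, hb₁, hb₁p⟩ := exists_gamma_bound θ₁ μ₁ h₁ ε hε
  obtain ⟨b₂, hb₂, hb₂p⟩ := exists_gamma_bound θ₂ μ₂ h₂ ε hε
  have hmin : 0 < min (min b₁ b₂) ε := lt_min (lt_min hb₁ hb₂) hε
  obtain ⟨δ, hδ0, hδ⟩ := exists_nsmul_lt' w V hV m hm hnp (n + 1) _ hmin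
  have hd1 : δ ≤ (n + 1) • δ := by
    calc δ = 1 • δ := (one_nsmul δ).symm
      _ ≤ (n + 1) • δ := nsmul_le_nsmul_left hδ0.le (by omega)
  have hn1 : n • δ ≤ (n + 1) • δ := nsmul_le_nsmul_left hδ0.le (by omega)
  refine ⟨δ, hδ0, ?_, ?_, ?_⟩
  · exact le_trans hd1 (le_of_lt (lt_of_lt_of_le hδ (le_trans (min_le_right _ _) le_rfl)))
  · exact hb₁p _ (lt_of_le_of_lt hn1 (lt_of_lt_of_le hδ (le_trans (min_le_left _ _) (min_le_left _ _))))
  · exact hb₂p _ (lt_of_le_of_lt hn1 (lt_of_lt_of_le hδ (le_trans (min_le_left _ _) (min_le_right _ _))))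

end Delta

section RootCount

lemma sum_rootMult {k : Type*} [Field k] [IsAlgClosed k] [DecidableEq k] (p : k[X]) (hp : p ≠ 0)
    (S : Finset k) (h0 : (0 : k) ∉ S) (hroots : ∀ ξ : k, p.IsRoot ξ → ξ ≠ 0 → ξ ∈ S) :
    (∑ ξ ∈ S, (p.rootMultiplicity ξ : ℤ)) =
      (p.natDegree : ℤ) - (p.natTrailingDegree : ℤ) := by
  have hcard : p.roots.card = p.natDegree :=
    Polynomial.splits_iff_card_roots.1 (IsAlgClosed.splits p)
  have hsub : p.roots.toFinset ⊆ insert 0 S := by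
    intro ξ hξ
    rw [Multiset.mem_toFinset, Polynomial.mem_roots hp] at hξ
    by_cases h : ξ = 0
    · rw [h]; exact Finset.mem_insert_self _ _
    · exact Finset.mem_insert_of_mem (hroots ξ hξ h)
  have hsum : (∑ ξ ∈ insert 0 S, p.roots.count ξ) = p.roots.card := by
    rw [← Multiset.toFinset_sum_count_eq p.roots]
    exact (Finset.sum_subset hsub (fun x _ hx =>
      Multiset.count_eq_zero.2 (fun hc => hx (Multiset.mem_toFinset.2 hc)))).symm
  rw [Finset.sum_insert h0] at hsum
  have h00 : p.roots.count 0 = p.natTrailingDegree := by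
    rw [Polynomial.count_roots, Polynomial.rootMultiplicity_eq_natTrailingDegree']
  have hS : ∀ ξ ∈ S, p.roots.count ξ = p.rootMultiplicity ξ := fun ξ _ =>
    Polynomial.count_roots p
  rw [h00, hcard, Finset.sum_congr rfl hS] at hsum
  have := congrArg (fun x : ℕ => (x : ℤ)) hsum
  push_cast at this
  linarith

end RootCount

section EvalVal

variable (w : AddVal K Γ) (V : Subring K) (hV : ∀ x : K, x ∈ V ↔ 0 ≤ w.v x)
  (m : Ideal ↥V) (hm : ∀ x : ↥V, x ∈ m ↔ 0 < w.v (x : K))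

include hV hm in
set_option maxHeartbeats 1000000 in
lemma eval_val {f : K[X]} (hf : f ≠ 0) {α μ : Γ} (hμ : minval w f α = (μ : WithTop Γ))
    {a₀ u : K} (ha₀ : w.v a₀ = (α : WithTop Γ)) (hu : w.v u = (μ : WithTop Γ)) (ξ' : ↥V) :
    ∃ θ : WithTop Γ, 0 < θ ∧ ∀ δ : Γ, 0 < δ →
      ((f.natDegree • δ : Γ) : WithTop Γ) < θ → ∀ t : K, w.v t = (δ : WithTop Γ) →
      w.v (f.eval (a₀ * ((ξ' : K) + t))) =
        ((μ + (Polynomial.rootMultiplicity (Ideal.Quotient.mk m ξ')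
          (resPoly V m f a₀ u)) • δ : Γ) : WithTop Γ) := by
  classical
  haveI : m.IsMaximal := m_isMaximal w V hV m hm
  set n := f.natDegree with hn
  have hu0 : u ≠ 0 := fun h => by rw [h, w.v_zero] at hu; exact WithTop.top_ne_coe hu
  have ha₀0 : a₀ ≠ 0 := fun h => by rw [h, w.v_zero] at ha₀; exact WithTop.top_ne_coe ha₀
  set c : ℕ → K := fun i => f.coeff i * a₀ ^ i / u with hc
  set P : K[X] := ∑ i ∈ Finset.range (n + 1), Polynomial.C (c i) * Polynomial.X ^ i with hP
  have hPcoeff : ∀ j, P.coeff j = if j ≤ n then c j else 0 := by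
    intro j
    rw [hP, Polynomial.finset_sum_coeff]
    simp only [Polynomial.coeff_C_mul, Polynomial.coeff_X_pow, mul_ite, mul_one, mul_zero]
    rw [Finset.sum_ite_eq (Finset.range (n + 1)) j]
    by_cases h : j ≤ n
    · rw [if_pos (Finset.mem_range.2 (Nat.lt_succ_of_le h)), if_pos h]
    · rw [if_neg (fun hh => h (Nat.lt_succ_iff.1 (Finset.mem_range.1 hh))), if_neg h]
  have hcV : ∀ j, c j ∈ V := by
    intro j
    by_cases hjn : j ≤ n
    · by_cases hfj : f.coeff j = 0
      · have : c j = 0 := by rw [hc]; simp [hfj]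
        rw [this]; exact V.zero_mem
      · lift w.v (f.coeff j) to Γ using w.v_ne_top hfj with e he
        have hvc : w.v (c j) = ((e + j • α - μ : Γ) : WithTop Γ) :=
          w.v_div (w.v_coe_mul he.symm (w.v_pow ha₀ j)) hu
        have hle : μ ≤ e + j • α := by
          have := minval_le w f α j hjn
          rw [hμ, ← he, ← WithTop.coe_add, WithTop.coe_le_coe] at this
          exact this
        exact (hV _).2 (by rw [hvc]; exact_mod_cast sub_nonneg.2 hle)
    · by_cases hfj : f.coeff j = 0
      · have : c j = 0 := by rw [hc]; simp [hfj]
        rw [this]; exact V.zero_mem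
      · exact absurd (Polynomial.le_natDegree_of_ne_zero hfj) hjn
  have hPV : ∀ j, P.coeff j ∈ V := by
    intro j
    rw [hPcoeff]
    by_cases h : j ≤ n
    · rw [if_pos h]; exact hcV j
    · rw [if_neg h]; exact V.zero_mem
  have hsub : (↑P.coeffs : Set K) ⊆ V := by
    intro x hx
    rw [Finset.mem_coe, Polynomial.mem_coeffs_iff] at hx
    obtain ⟨j, _, rfl⟩ := hx
    exact hPV j
  set Q : Polynomial ↥V := P.toSubring V hsub with hQ
  have hQP : Q.map V.subtype = P := Polynomial.map_toSubring P V hsub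
  have hQcoeff : ∀ j, ((Q.coeff j : ↥V) : K) = P.coeff j := fun j =>
    Polynomial.coeff_toSubring P V hsub
  have hQres : Q.map (Ideal.Quotient.mk m) = resPoly V m f a₀ u := by
    ext j
    rw [Polynomial.coeff_map, resPoly_coeff]
    by_cases h : j ≤ n
    · rw [if_pos h]
      rw [resCoef_of_mem V m (hcV j)]
      congr 1
      apply Subtype.ext
      rw [hQcoeff j, hPcoeff j, if_pos h]
    · rw [if_neg h]
      have : Q.coeff j = 0 := by
        apply Subtype.ext
        rw [hQcoeff j, hPcoeff j, if_neg h]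
        rfl
      rw [this, map_zero]
  set ξ : ↥V ⧸ m := Ideal.Quotient.mk m ξ' with hξ
  set fbar : Polynomial (↥V ⧸ m) := resPoly V m f a₀ u with hfbar
  set T : Polynomial (↥V ⧸ m) := fbar.comp (Polynomial.X + Polynomial.C ξ) with hT
  have hfbar0 : fbar ≠ 0 := resPoly_ne_zero w V hV m hm hf hμ ha₀ hu
  have hT0 : T ≠ 0 := Polynomial.comp_X_add_C_ne_zero_iff.2 hfbar0
  set mf : ℕ := Polynomial.rootMultiplicity ξ fbar with hmf
  have hmfT : mf = T.natTrailingDegree := Polynomial.rootMultiplicity_eq_natTrailingDegree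
  set R : Polynomial ↥V := Q.comp (Polynomial.X + Polynomial.C ξ') with hR
  have hRres : R.map (Ideal.Quotient.mk m) = T := by
    rw [hR, Polynomial.map_comp, hQres, hT, hfbar]
    congr 1
    rw [Polynomial.map_add, Polynomial.map_X, Polynomial.map_C, hξ]
  have hRmap : R.map V.subtype = P.comp (Polynomial.X + Polynomial.C (ξ' : K)) := by
    rw [hR, Polynomial.map_comp, hQP]
    congr 1
    rw [Polynomial.map_add, Polynomial.map_X, Polynomial.map_C]
    rfl
  have hTcoeff : ∀ j, (Ideal.Quotient.mk m) (R.coeff j) = T.coeff j := by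
    intro j
    rw [← hRres, Polynomial.coeff_map]
  have hR0 : ∀ j, (0 : WithTop Γ) ≤ w.v ((R.coeff j : ↥V) : K) := fun j => (hV _).1 (R.coeff j).2
  have hRlt : ∀ j < mf, (0 : WithTop Γ) < w.v ((R.coeff j : ↥V) : K) := by
    intro j hj
    have h1 : T.coeff j = 0 :=
      Polynomial.coeff_eq_zero_of_lt_natTrailingDegree (hmfT ▸ hj)
    have h2 : R.coeff j ∈ m := by
      rw [← Ideal.Quotient.eq_zero_iff_mem, hTcoeff, h1]
    exact (hm _).1 h2
  have hRmf : w.v ((R.coeff mf : ↥V) : K) = ((0 : Γ) : WithTop Γ) := by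
    have h1 : T.coeff mf ≠ 0 := by
      rw [hmfT]
      exact Polynomial.trailingCoeff_nonzero_iff_nonzero.2 hT0
    have h2 : R.coeff mf ∉ m := by
      rw [← Ideal.Quotient.eq_zero_iff_mem]
      rw [hTcoeff]
      exact h1
    have h3 : ¬ (0 : WithTop Γ) < w.v ((R.coeff mf : ↥V) : K) := fun h => h2 ((hm _).2 h)
    rw [WithTop.coe_zero]
    exact le_antisymm (not_lt.1 h3) (hR0 mf)
  have hmfn : mf ≤ n := by
    calc mf = T.natTrailingDegree := hmfT
      _ ≤ T.natDegree := Polynomial.natTrailingDegree_le_natDegree T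
      _ ≤ fbar.natDegree * (Polynomial.X + Polynomial.C ξ).natDegree :=
          Polynomial.natDegree_comp_le
      _ ≤ fbar.natDegree * 1 := by
          apply Nat.mul_le_mul_left
          exact le_of_eq (Polynomial.natDegree_X_add_C ξ)
      _ = fbar.natDegree := mul_one _
      _ ≤ n := natDegree_resPoly_le V m f a₀ u
  set θ : WithTop Γ := (Finset.range mf).inf (fun j => w.v ((R.coeff j : ↥V) : K)) with hθ
  have hθpos : (0 : WithTop Γ) < θ := by
    rw [hθ, Finset.lt_inf_iff (lt_top_iff_ne_top.2 (by simp))]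
    intro j hj
    exact hRlt j (Finset.mem_range.1 hj)
  refine ⟨θ, hθpos, ?_⟩
  intro δ hδ hδθ t ht
  have hPev : ∀ y : K, u * P.eval y = f.eval (a₀ * y) := by
    intro y
    rw [hP, Polynomial.eval_finset_sum, Polynomial.eval_eq_sum_range, ← hn, Finset.mul_sum]
    apply Finset.sum_congr rfl
    intro i _
    simp only [Polynomial.eval_mul, Polynomial.eval_C, Polynomial.eval_pow, Polynomial.eval_X, hc]
    field_simp
    ring
  have heval : f.eval (a₀ * ((ξ' : K) + t)) = u * (R.map V.subtype).eval t := by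
    rw [hRmap, Polynomial.eval_comp, Polynomial.eval_add, Polynomial.eval_X, Polynomial.eval_C,
      hPev (t + (ξ' : K))]
    congr 1
    ring
  set N := (R.map V.subtype).natDegree with hN
  have hsum : (R.map V.subtype).eval t =
      ∑ j ∈ Finset.range (N + 1), ((R.coeff j : ↥V) : K) * t ^ j := by
    rw [Polynomial.eval_eq_sum_range]
    apply Finset.sum_congr rfl
    intro j _
    rw [Polynomial.coeff_map]
    rfl
  have hterm : ∀ j, w.v (((R.coeff j : ↥V) : K) * t ^ j) =
      w.v ((R.coeff j : ↥V) : K) + ((j • δ : Γ) : WithTop Γ) := by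
    intro j
    rw [w.v_mul]
    congr 1
    exact w.v_pow ht j
  have hmfN : mf ≤ N := by
    apply Polynomial.le_natDegree_of_ne_zero
    rw [Polynomial.coeff_map]
    intro h
    have h0 := hRmf
    rw [show ((R.coeff mf : ↥V) : K) = V.subtype (R.coeff mf) from rfl, h, w.v_zero] at h0
    exact WithTop.top_ne_coe h0
  have hvmain : w.v (∑ j ∈ Finset.range (N + 1), ((R.coeff j : ↥V) : K) * t ^ j) =
      ((mf • δ : Γ) : WithTop Γ) := by
    have hmf_eq : w.v (((R.coeff mf : ↥V) : K) * t ^ mf) = ((mf • δ : Γ) : WithTop Γ) := by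
      rw [hterm mf, hRmf, ← WithTop.coe_add, zero_add]
    rw [w.v_sum_eq (Finset.range (N + 1)) _ mf
      (Finset.mem_range.2 (Nat.lt_succ_of_le hmfN))
      (by rw [hmf_eq]; exact WithTop.coe_ne_top) ?_, hmf_eq]
    intro j hjr hjne
    rw [hmf_eq, hterm j]
    rcases Nat.lt_or_ge j mf with hjmf | hjmf
    · have hθj : θ ≤ w.v ((R.coeff j : ↥V) : K) :=
        Finset.inf_le (Finset.mem_range.2 hjmf)
      have h1 : ((n • δ : Γ) : WithTop Γ) < w.v ((R.coeff j : ↥V) : K) :=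
        lt_of_lt_of_le hδθ hθj
      have h2 : ((mf - j) • δ : Γ) ≤ (n • δ : Γ) :=
        nsmul_le_nsmul_left hδ.le (le_trans (Nat.sub_le mf j) hmfn)
      have h3 : (((mf - j) • δ : Γ) : WithTop Γ) < w.v ((R.coeff j : ↥V) : K) :=
        lt_of_le_of_lt (WithTop.coe_le_coe.2 h2) h1
      have h4 : mf • δ = (mf - j) • δ + j • δ := by
        rw [← add_nsmul, Nat.sub_add_cancel hjmf.le]
      rw [h4, WithTop.coe_add]
      exact WithTop.add_lt_add_right (WithTop.coe_ne_top) h3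
    · have hjgt : mf < j := lt_of_le_of_ne hjmf (Ne.symm hjne)
      have h3 : ((mf • δ : Γ) : WithTop Γ) < ((j • δ : Γ) : WithTop Γ) :=
        WithTop.coe_lt_coe.2 (nsmul_lt_nsmul_left hδ hjgt)
      exact lt_of_lt_of_le h3 (le_add_of_nonneg_left (hR0 j))
  rw [heval, w.v_mul, hu, hsum, hvmain, ← WithTop.coe_add]

end EvalVal

set_option maxHeartbeats 2000000 in
/-- Suppose `V/𝔪` is algebraically closed (every polynomial over `V/𝔪` of
positive degree has a root) and `𝔪` is not principal.  Let `φ ∈ K(x)` be nonzero and suppose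
that for some `α, ε ∈ Γ` with `ε > 0`, `minval_φ(γ) = c₁γ + β₁` for `α - ε ≤ γ ≤ α` and
`minval_φ(γ) = c₂γ + β₂` for `α ≤ γ ≤ α + ε`.  If `c₁ > c₂`, there exists `a ∈ K` with
`v(a) = α` and `v(φ(a)) > minval_φ(α)`; if `c₁ < c₂`, there exists `a ∈ K` with `v(a) = α`
and `v(φ(a)) < minval_φ(α)`. -/
theorem statement11 (K : Type*) [Field K] (Γ : Type*) [AddCommGroup Γ] [LinearOrder Γ] [IsOrderedAddMonoid Γ]
    (w : AddVal K Γ)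
    (V : Subring K) (hV : ∀ x : K, x ∈ V ↔ 0 ≤ w.v x)
    (m : Ideal ↥V) (hm : ∀ x : ↥V, x ∈ m ↔ 0 < w.v (x : K))
    (halg : ∀ p : Polynomial (↥V ⧸ m), 0 < p.degree → ∃ ξ, p.IsRoot ξ)
    (hnp : ¬ m.IsPrincipal)
    (φ : RatFunc K) (hφ : φ ≠ 0)
    (α ε : Γ) (hε : 0 < ε) (c₁ c₂ : ℤ) (β₁ β₂ : Γ)
    (h₁ : ∀ γ : Γ, α - ε ≤ γ → γ ≤ α → minvalRat w φ γ = c₁ • γ + β₁)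
    (h₂ : ∀ γ : Γ, α ≤ γ → γ ≤ α + ε → minvalRat w φ γ = c₂ • γ + β₂) :
    (c₂ < c₁ → ∃ a : K, w.v a = (α : WithTop Γ) ∧ φ.denom.eval a ≠ 0 ∧
        ((minvalRat w φ α : Γ) : WithTop Γ) < w.v (φ.num.eval a / φ.denom.eval a)) ∧
    (c₁ < c₂ → ∃ a : K, w.v a = (α : WithTop Γ) ∧ φ.denom.eval a ≠ 0 ∧
        w.v (φ.num.eval a / φ.denom.eval a) < ((minvalRat w φ α : Γ) : WithTop Γ)) := by
  classical
  haveI : m.IsMaximal := m_isMaximal w V hV m hm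
  letI : Field (↥V ⧸ m) := Ideal.Quotient.field m
  haveI : IsAlgClosed (↥V ⧸ m) := by
    apply IsAlgClosed.of_exists_root
    intro p _ hirr
    obtain ⟨ξ, hξ⟩ := halg p (Polynomial.degree_pos_of_irreducible hirr)
    exact ⟨ξ, hξ⟩
  set f : K[X] := φ.num with hfdef
  set g : K[X] := φ.denom with hgdef
  have hf : f ≠ 0 := RatFunc.num_ne_zero hφ
  have hg : g ≠ 0 := φ.denom_ne_zero
  obtain ⟨μf, hμf⟩ : ∃ μf : Γ, minval w f α = (μf : WithTop Γ) := by
    rcases WithTop.ne_top_iff_exists.1 (minval_ne_top w hf α) with ⟨μ, h⟩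
    exact ⟨μ, h.symm⟩
  obtain ⟨μg, hμg⟩ : ∃ μg : Γ, minval w g α = (μg : WithTop Γ) := by
    rcases WithTop.ne_top_iff_exists.1 (minval_ne_top w hg α) with ⟨μ, h⟩
    exact ⟨μ, h.symm⟩
  obtain ⟨a₀, ha₀⟩ := w.v_surj α
  obtain ⟨uf, huf⟩ := w.v_surj μf
  obtain ⟨ug, hug⟩ := w.v_surj μg
  set fbar := resPoly V m f a₀ uf with hfbardef
  set gbar := resPoly V m g a₀ ug with hgbardef
  have hfbar0 : fbar ≠ 0 := resPoly_ne_zero w V hV m hm hf hμf ha₀ huf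
  have hgbar0 : gbar ≠ 0 := resPoly_ne_zero w V hV m hm hg hμg ha₀ hug
  set n : ℕ := max f.natDegree g.natDegree with hn
  have hmr : minvalRat w φ α = μf - μg := by
    rw [minvalRat, ← hfdef, ← hgdef, hμf, hμg]
    rfl
  -- SLOPE IDENTITIES
  obtain ⟨δ₁, hδ₁0, hδ₁ε, hδ₁f, hδ₁g⟩ := exists_delta w V hV m hm hnp
    (theta w f α) (theta w g α) μf μg
    (hμf ▸ minval_lt_theta w hf α) (hμg ▸ minval_lt_theta w hg α) ε hε n
  have hθf1 : ((μf + f.natDegree • δ₁ : Γ) : WithTop Γ) < theta w f α := by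
    refine lt_of_le_of_lt ?_ hδ₁f
    rw [WithTop.coe_le_coe]
    exact add_le_add_right (nsmul_le_nsmul_left hδ₁0.le (le_max_left _ _)) μf
  have hθg1 : ((μg + g.natDegree • δ₁ : Γ) : WithTop Γ) < theta w g α := by
    refine lt_of_le_of_lt ?_ hδ₁g
    rw [WithTop.coe_le_coe]
    exact add_le_add_right (nsmul_le_nsmul_left hδ₁0.le (le_max_right _ _)) μg
  have hL : minvalRat w φ (α - δ₁) = (μf - iMax w f α • δ₁) - (μg - iMax w g α • δ₁) := by
    rw [minvalRat, ← hfdef, ← hgdef, minval_shift_left w hf hμf hδ₁0 hθf1,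
      minval_shift_left w hg hμg hδ₁0 hθg1]
    rfl
  have hR : minvalRat w φ (α + δ₁) = (μf + iMin w f α • δ₁) - (μg + iMin w g α • δ₁) := by
    rw [minvalRat, ← hfdef, ← hgdef, minval_shift_right w hf hμf hδ₁0 hθf1,
      minval_shift_right w hg hμg hδ₁0 hθg1]
    rfl
  have e₀ := h₁ α (sub_le_self α hε.le) le_rfl
  have eL := h₁ (α - δ₁) (sub_le_sub_left hδ₁ε α) (sub_le_self α hδ₁0.le)
  have e₀' := h₂ α le_rfl (le_add_of_nonneg_right hε.le)
  have eR := h₂ (α + δ₁) (le_add_of_nonneg_right hδ₁0.le) (add_le_add_right hδ₁ε α)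
  rw [hmr] at e₀ e₀'
  rw [hL] at eL
  rw [hR] at eR
  have hc₁ : c₁ = (iMax w f α : ℤ) - (iMax w g α : ℤ) := by
    have hdiff : (c₁ - ((iMax w f α : ℤ) - (iMax w g α : ℤ))) • δ₁ = 0 := by
      have h5 : c₁ • α + β₁ - (c₁ • (α - δ₁) + β₁) = c₁ • δ₁ := by
        rw [smul_sub]
        abel
      rw [← e₀, ← eL] at h5
      have h6 : (μf - μg) - ((μf - iMax w f α • δ₁) - (μg - iMax w g α • δ₁)) =
          ((iMax w f α : ℤ) - (iMax w g α : ℤ)) • δ₁ := by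
        rw [sub_smul, natCast_zsmul, natCast_zsmul]
        abel
      rw [h6] at h5
      rw [sub_smul, h5, sub_self]
    have := zsmul_eq_zero_int hδ₁0 hdiff
    omega
  have hc₂ : c₂ = (iMin w f α : ℤ) - (iMin w g α : ℤ) := by
    have hdiff : (((iMin w f α : ℤ) - (iMin w g α : ℤ)) - c₂) • δ₁ = 0 := by
      have h5 : c₂ • (α + δ₁) + β₂ - (c₂ • α + β₂) = c₂ • δ₁ := by
        rw [smul_add]
        abel
      rw [← e₀', ← eR] at h5
      have h6 : ((μf + iMin w f α • δ₁) - (μg + iMin w g α • δ₁)) - (μf - μg) =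
          ((iMin w f α : ℤ) - (iMin w g α : ℤ)) • δ₁ := by
        rw [sub_smul, natCast_zsmul, natCast_zsmul]
        abel
      rw [h6] at h5
      rw [sub_smul, h5, sub_self]
    have := zsmul_eq_zero_int hδ₁0 hdiff
    omega
  -- ROOT COUNTS
  set S : Finset (↥V ⧸ m) := (fbar.roots.toFinset ∪ gbar.roots.toFinset).erase 0 with hS
  have h0S : (0 : ↥V ⧸ m) ∉ S := Finset.notMem_erase _ _
  have hsumf : (∑ ξ ∈ S, (fbar.rootMultiplicity ξ : ℤ)) =
      (iMax w f α : ℤ) - (iMin w f α : ℤ) := by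
    rw [sum_rootMult fbar hfbar0 S h0S ?_, natDegree_resPoly w V hV m hm hf hμf ha₀ huf,
      natTrailingDegree_resPoly w V hV m hm hf hμf ha₀ huf]
    intro ξ hroot hξ0
    exact Finset.mem_erase.2 ⟨hξ0, Finset.mem_union_left _
      (Multiset.mem_toFinset.2 ((Polynomial.mem_roots hfbar0).2 hroot))⟩
  have hsumg : (∑ ξ ∈ S, (gbar.rootMultiplicity ξ : ℤ)) =
      (iMax w g α : ℤ) - (iMin w g α : ℤ) := by
    rw [sum_rootMult gbar hgbar0 S h0S ?_, natDegree_resPoly w V hV m hm hg hμg ha₀ hug,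
      natTrailingDegree_resPoly w V hV m hm hg hμg ha₀ hug]
    intro ξ hroot hξ0
    exact Finset.mem_erase.2 ⟨hξ0, Finset.mem_union_right _
      (Multiset.mem_toFinset.2 ((Polynomial.mem_roots hgbar0).2 hroot))⟩
  -- KEY CONSTRUCTION
  have key : ∀ ξ : ↥V ⧸ m, ξ ≠ 0 → ∃ δ : Γ, 0 < δ ∧ ∃ a : K,
      w.v a = (α : WithTop Γ) ∧ φ.denom.eval a ≠ 0 ∧
      w.v (φ.num.eval a / φ.denom.eval a) =
        (((μf + fbar.rootMultiplicity ξ • δ) - (μg + gbar.rootMultiplicity ξ • δ) : Γ) :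
          WithTop Γ) := by
    intro ξ hξ0
    obtain ⟨ξ', hξ'⟩ := Ideal.Quotient.mk_surjective ξ
    have hξ'm : ξ' ∉ m := fun h => hξ0 (hξ' ▸ Ideal.Quotient.eq_zero_iff_mem.2 h)
    have hvξ' : w.v ((ξ' : ↥V) : K) = ((0 : Γ) : WithTop Γ) := by
      rw [WithTop.coe_zero]
      exact le_antisymm (not_lt.1 (fun h => hξ'm ((hm _).2 h))) ((hV _).1 ξ'.2)
    obtain ⟨θf, hθf0, hθf⟩ := eval_val w V hV m hm hf hμf ha₀ huf ξ'
    obtain ⟨θg, hθg0, hθg⟩ := eval_val w V hV m hm hg hμg ha₀ hug ξ'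
    obtain ⟨δ, hδ0, _, hδf, hδg⟩ := exists_delta w V hV m hm hnp θf θg 0 0
      (by rwa [WithTop.coe_zero]) (by rwa [WithTop.coe_zero]) ε hε n
    rw [zero_add] at hδf hδg
    have hδf' : ((f.natDegree • δ : Γ) : WithTop Γ) < θf :=
      lt_of_le_of_lt (WithTop.coe_le_coe.2
        (nsmul_le_nsmul_left hδ0.le (le_max_left _ _))) hδf
    have hδg' : ((g.natDegree • δ : Γ) : WithTop Γ) < θg :=
      lt_of_le_of_lt (WithTop.coe_le_coe.2
        (nsmul_le_nsmul_left hδ0.le (le_max_right _ _))) hδg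
    obtain ⟨t, ht⟩ := w.v_surj δ
    set a : K := a₀ * ((ξ' : K) + t) with ha
    have hvf := hθf δ hδ0 hδf' t ht
    have hvg := hθg δ hδ0 hδg' t ht
    rw [hξ'] at hvf hvg
    have hva : w.v a = (α : WithTop Γ) := by
      rw [ha, w.v_mul, ha₀]
      have : w.v ((ξ' : K) + t) = ((0 : Γ) : WithTop Γ) := by
        rw [w.v_add_eq_left]
        · exact hvξ'
        · rw [hvξ', ht]
          exact_mod_cast hδ0
      rw [this, ← WithTop.coe_add, add_zero]
    have hgne : φ.denom.eval a ≠ 0 := by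
      intro h
      rw [← hgdef] at h
      rw [h, w.v_zero] at hvg
      exact WithTop.top_ne_coe hvg
    refine ⟨δ, hδ0, a, hva, hgne, ?_⟩
    rw [← hfdef, ← hgdef]
    exact w.v_div hvf hvg
  refine ⟨?_, ?_⟩
  · intro hc
    have hsumlt : (∑ ξ ∈ S, (gbar.rootMultiplicity ξ : ℤ)) <
        (∑ ξ ∈ S, (fbar.rootMultiplicity ξ : ℤ)) := by
      rw [hsumf, hsumg]
      omega
    obtain ⟨ξ, hξS, hξlt⟩ := Finset.exists_lt_of_sum_lt hsumlt
    have hξ0 : ξ ≠ 0 := Finset.ne_of_mem_erase hξS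
    obtain ⟨δ, hδ0, a, hva, hgne, hvφ⟩ := key ξ hξ0
    refine ⟨a, hva, hgne, ?_⟩
    rw [hvφ, hmr, WithTop.coe_lt_coe]
    have hmlt : gbar.rootMultiplicity ξ < fbar.rootMultiplicity ξ := by exact_mod_cast hξlt
    have heq : (μf + fbar.rootMultiplicity ξ • δ) - (μg + gbar.rootMultiplicity ξ • δ) =
        (μf - μg) + (fbar.rootMultiplicity ξ • δ - gbar.rootMultiplicity ξ • δ) := by abel
    rw [heq]
    exact lt_add_of_pos_right _ (sub_pos.2 (nsmul_lt_nsmul_left hδ0 hmlt))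
  · intro hc
    have hsumlt : (∑ ξ ∈ S, (fbar.rootMultiplicity ξ : ℤ)) <
        (∑ ξ ∈ S, (gbar.rootMultiplicity ξ : ℤ)) := by
      rw [hsumf, hsumg]
      omega
    obtain ⟨ξ, hξS, hξlt⟩ := Finset.exists_lt_of_sum_lt hsumlt
    have hξ0 : ξ ≠ 0 := Finset.ne_of_mem_erase hξS
    obtain ⟨δ, hδ0, a, hva, hgne, hvφ⟩ := key ξ hξ0
    refine ⟨a, hva, hgne, ?_⟩
    rw [hvφ, hmr, WithTop.coe_lt_coe]
    have hmlt : fbar.rootMultiplicity ξ < gbar.rootMultiplicity ξ := by exact_mod_cast hξlt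
    have heq : (μf + fbar.rootMultiplicity ξ • δ) - (μg + gbar.rootMultiplicity ξ • δ) =
        (μf - μg) + (fbar.rootMultiplicity ξ • δ - gbar.rootMultiplicity ξ • δ) := by abel
    rw [heq]
    exact add_lt_of_neg_right _ (sub_neg.2 (nsmul_lt_nsmul_left hδ0 hmlt))
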